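/- Cokernels in the category of mixed Hodge structures: let f : (V, W, F) → (V', W', F') be a morphism of mixed Hodge structures, let Q := V' / f(V) with quotient map π : V' → Q, and identify Q_ℂ with V'_ℂ / f_ℂ(V_ℂ) with quotient map π_ℂ. Then the induced filtrations W^Q_n := π(W'_n) on Q and F^p_Q := π_ℂ(F'^p) on Q_ℂ define a mixed Hodge structure on Q. -/

import Mathlib

open scoped TensorProduct

private lemma sigmaC_aux (V : Type*) [AddCommGroup V] [Module ℝ V] (c : ℂ) (x : ℂ ⊗[ℝ] V) :
    TensorProduct.map Complex.conjAe.toLinearMap LinearMap.id (c • x) =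
      (starRingEnd ℂ) c • TensorProduct.map Complex.conjAe.toLinearMap LinearMap.id x := by
  induction x using TensorProduct.induction_on with
  | zero => simp
  | tmul z v => simp [TensorProduct.smul_tmul', smul_eq_mul, map_mul]
  | add x y hx hy => simp only [smul_add, map_add, hx, hy]

/-- The conjugation involution `σ` of the complexification `ℂ ⊗[ℝ] V`,
as a `conj`-semilinear map. -/
noncomputable def sigmaC (V : Type*) [AddCommGroup V] [Module ℝ V] :
    (ℂ ⊗[ℝ] V) →ₛₗ[starRingEnd ℂ] (ℂ ⊗[ℝ] V) where
  toFun := TensorProduct.map Complex.conjAe.toLinearMap LinearMap.id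
  map_add' x y := map_add _ x y
  map_smul' c x := sigmaC_aux V c x

/-- A mixed Hodge structure on a real vector space `V`: an increasing, bounded, exhaustive
weight filtration `W` of `V` by real subspaces and a decreasing, bounded, exhaustive Hodge
filtration `F` of `V_ℂ = ℂ ⊗[ℝ] V` by complex subspaces, such that for every `n` the
filtration induced by `F` on `Gr^W_n = W_n / W_{n-1}` is a Hodge filtration of weight `n`.

Identifying the complexification of `Gr^W_n` with `(W_n)_ℂ / (W_{n-1})_ℂ` (where
`(W_n)_ℂ := (W n).baseChange ℂ ⊆ V_ℂ`), the Hodge filtration condition of weight `n` on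
`Gr^W_n` — namely `F^p(Gr^W_n)_ℂ ⊕ σ(F^{n-p+1}(Gr^W_n)_ℂ) = (Gr^W_n)_ℂ` for all `p`, where
`F^p(Gr^W_n)_ℂ` is the image of `F^p ⊓ (W_n)_ℂ` — is expressed below by pulling back along
the quotient map `(W_n)_ℂ → (W_n)_ℂ / (W_{n-1})_ℂ`: the first displayed equation is the
disjointness of the two images in the quotient, the second their spanning of the quotient. -/
def IsMixedHodgeStructure (V : Type*) [AddCommGroup V] [Module ℝ V]
    (W : ℤ → Submodule ℝ V) (F : ℤ → Submodule ℂ (ℂ ⊗[ℝ] V)) : Prop :=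
  Monotone W ∧
  (∃ a : ℤ, ∀ n ≤ a, W n = ⊥) ∧
  (∃ b : ℤ, ∀ n ≥ b, W n = ⊤) ∧
  (∀ p : ℤ, F (p + 1) ≤ F p) ∧
  (∃ a : ℤ, ∀ p ≤ a, F p = ⊤) ∧
  (∃ b : ℤ, ∀ p ≥ b, F p = ⊥) ∧
  (∀ n p : ℤ,
    ((F p ⊓ (W n).baseChange ℂ) ⊔ (W (n - 1)).baseChange ℂ) ⊓
        (((F (n - p + 1) ⊓ (W n).baseChange ℂ).map (sigmaC V)) ⊔ (W (n - 1)).baseChange ℂ)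
      = (W (n - 1)).baseChange ℂ ∧
    (F p ⊓ (W n).baseChange ℂ) ⊔ ((F (n - p + 1) ⊓ (W n).baseChange ℂ).map (sigmaC V))
        ⊔ (W (n - 1)).baseChange ℂ
      = (W n).baseChange ℂ)

/-!
Deligne's splitting. For a mixed Hodge structure `(W, F)` on `V` and `F̄ = σ(F)`, the subspaces
`I^{p,q} = F^p ∩ W_{p+q} ∩ (F̄^q ∩ W_{p+q} + ∑_{j ≥ 1} F̄^{q-j} ∩ W_{p+q-j-1})` of `V_ℂ` are
independent, `W_n` is the sum of the `I^{p,q}` with `p + q ≤ n`, `F^p` the sum of those with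
first index at least `p`, and `σ(I^{p,q}) ⊆ I^{q,p} + W_{p+q-1}`; conversely, filtrations admitting
such a splitting satisfy the Hodge conditions on every `Gr^W_n`. The construction is functorial,
so `f_ℂ(V_ℂ) = ∑ f_ℂ(I^{p,q}(V))` with `f_ℂ(I^{p,q}(V)) ⊆ I^{p,q}(V')`. Hence the images of the
`I^{p,q}(V')` in `Q_ℂ` remain independent, and they split the induced filtrations on `Q`.
-/

theorem iSupIndep.biSup_inf_biSup {α ι : Type*} [CompleteLattice α] [IsCompactlyGenerated α]
    [IsModularLattice α] {f : ι → α} (hf : iSupIndep f) (s t : Set ι) :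
    (⨆ i ∈ s, f i) ⊓ (⨆ i ∈ t, f i) = ⨆ i ∈ s ∩ t, f i := by
  refine le_antisymm (le_of_eq ?_)
    (le_inf (biSup_mono fun _ => And.left) (biSup_mono fun _ => And.right))
  calc (⨆ i ∈ s, f i) ⊓ (⨆ i ∈ t, f i)
      = ((⨆ i ∈ s ∩ t, f i) ⊔ ⨆ i ∈ s \ t, f i) ⊓ ⨆ i ∈ t, f i := by
        rw [← iSup_union, Set.inter_union_sdiff]
    _ = (⨆ i ∈ s ∩ t, f i) ⊔ (⨆ i ∈ s \ t, f i) ⊓ ⨆ i ∈ t, f i :=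
        sup_inf_assoc_of_le _ (biSup_mono fun _ => And.right)
    _ = ⨆ i ∈ s ∩ t, f i := by
        rw [(hf.disjoint_biSup_biSup Set.disjoint_sdiff_left).eq_bot, sup_bot_eq]

theorem iSupIndep.map_of_ker_eq_iSup {R M N ι : Type*} [Ring R] [AddCommGroup M] [Module R M]
    [AddCommGroup N] [Module R N] {I K : ι → Submodule R M} (hI : iSupIndep I) (hKI : K ≤ I)
    (g : M →ₗ[R] N) (hker : LinearMap.ker g = ⨆ i, K i) :
    iSupIndep fun i => (I i).map g := by
  refine iSupIndep_def.2 fun i => disjoint_iff.2 (eq_bot_iff.2 ?_)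
  have hKi : K i ≤ LinearMap.ker g := hker ▸ le_iSup K i
  have hKS : (⨆ j ≠ i, K j) ≤ ⨆ j ≠ i, I j := iSup₂_mono fun j _ => hKI j
  calc (I i).map g ⊓ ⨆ j ≠ i, (I j).map g
      = (I i ⊓ (K i ⊔ ((⨆ j ≠ i, K j) ⊔ ⨆ j ≠ i, I j))).map g := by
        simp only [← Submodule.map_iSup, Submodule.map_inf_eq_map_inf_comap,
          Submodule.comap_map_eq, hker, iSup_split_single K i]
        rw [sup_comm (⨆ j ≠ i, I j), sup_assoc]
    _ = (K i ⊔ I i ⊓ ⨆ j ≠ i, I j).map g := by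
        rw [sup_eq_right.2 hKS, inf_comm, sup_inf_assoc_of_le _ (hKI i), inf_comm]
    _ ≤ ⊥ := by
        rw [(hI i).eq_bot, sup_bot_eq, Submodule.map_le_iff_le_comap, Submodule.comap_bot]
        exact hKi

section Semilinear

variable {M N : Type*} [AddCommGroup M] [Module ℂ M] [AddCommGroup N] [Module ℂ N]
  {σ : M →ₛₗ[starRingEnd ℂ] M} {σ' : N →ₛₗ[starRingEnd ℂ] N}

theorem Submodule.map_map_of_involutive (hσ : Function.Involutive σ) (p : Submodule ℂ M) :
    (p.map σ).map σ = p := by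
  ext x
  refine ⟨?_, fun hx => ⟨σ x, ⟨x, hx, rfl⟩, hσ x⟩⟩
  rintro ⟨_, ⟨y, hy, rfl⟩, rfl⟩
  rwa [hσ y]

theorem Submodule.map_eq_of_involutive (hσ : Function.Involutive σ) {p : Submodule ℂ M}
    (hp : p.map σ ≤ p) : p.map σ = p :=
  le_antisymm hp <| (Submodule.map_map_of_involutive hσ p).ge.trans (Submodule.map_mono hp)

theorem Submodule.map_map_comm (g : M →ₗ[ℂ] N) (hg : ∀ x, g (σ x) = σ' (g x))
    (p : Submodule ℂ M) : (p.map σ).map g = (p.map g).map σ' := by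
  ext x
  constructor
  · rintro ⟨_, ⟨y, hy, rfl⟩, rfl⟩
    exact ⟨g y, ⟨y, hy, rfl⟩, (hg y).symm⟩
  · rintro ⟨_, ⟨y, hy, rfl⟩, rfl⟩
    exact ⟨σ y, ⟨y, hy, rfl⟩, hg y⟩

end Semilinear

section BaseChange

variable {R A M N P : Type*} [CommRing R] [CommRing A] [Algebra R A] [AddCommGroup M]
  [Module R M] [AddCommGroup N] [Module R N] [AddCommGroup P] [Module R P]

theorem Submodule.baseChange_map (g : M →ₗ[R] N) (p : Submodule R M) :
    (p.map g).baseChange A = (p.baseChange A).map (g.baseChange A) := by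
  simp only [Submodule.baseChange_eq_span, Submodule.map_span, Submodule.map_coe, Set.image_image]
  congr 1

theorem Function.Exact.ker_baseChange {f : M →ₗ[R] N} {g : N →ₗ[R] P} (hfg : Function.Exact f g)
    (hg : Function.Surjective g) :
    LinearMap.ker (g.baseChange A) = LinearMap.range (f.baseChange A) := by
  have h := lTensor_exact A hfg hg
  rw [← LinearMap.baseChange_eq_ltensor, ← LinearMap.baseChange_eq_ltensor] at h
  exact LinearMap.exact_iff.mp h

end BaseChange

section Opposed

variable {R M : Type*} [Ring R] [AddCommGroup M] [Module R M] {W F G : ℤ → Submodule R M}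

/-- The filtration induced by `F` on `Gr^W_n = W_n / W_{n-1}`, pulled back to `W_n`. -/
def grFiltration (W F : ℤ → Submodule R M) (n p : ℤ) : Submodule R M := F p ⊓ W n ⊔ W (n - 1)

theorem grFiltration_antitone (hF : Antitone F) (n : ℤ) : Antitone (grFiltration W F n) :=
  fun _ _ h => sup_le_sup_right (inf_le_inf_right _ (hF h)) _

theorem grFiltration_le (hW : Monotone W) (n p : ℤ) : grFiltration W F n p ≤ W n :=
  sup_le inf_le_right (hW (by omega))

/-- `F` and `G` induce `n`-opposed filtrations on every `Gr^W_n`, and `W` and `F` are finite.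
For a mixed Hodge structure, `G` is the complex conjugate of `F`. -/
structure IsOpposed (W F G : ℤ → Submodule R M) : Prop where
  monotone : Monotone W
  antitone_left : Antitone F
  antitone_right : Antitone G
  exists_eq_bot : ∃ a, ∀ n ≤ a, W n = ⊥
  exists_eq_top : ∃ b, ∀ n ≥ b, W n = ⊤
  exists_left_eq_top : ∃ a, ∀ p ≤ a, F p = ⊤
  exists_left_eq_bot : ∃ b, ∀ p ≥ b, F p = ⊥
  inf_le : ∀ n p, grFiltration W F n p ⊓ grFiltration W G n (n - p + 1) ≤ W (n - 1)
  le_sup : ∀ n p, W n ≤ grFiltration W F n p ⊔ grFiltration W G n (n - p + 1)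

namespace IsOpposed

theorem inf_le_of_lt (h : IsOpposed W F G) {n p q : ℤ} (hpq : n < p + q) :
    grFiltration W F n p ⊓ grFiltration W G n q ≤ W (n - 1) :=
  (inf_le_inf_left _ (grFiltration_antitone h.antitone_right n (by omega))).trans (h.inf_le n p)

theorem grFiltration_le_sup (h : IsOpposed W F G) (n p : ℤ) :
    grFiltration W F n p ≤
      grFiltration W F n (p + 1) ⊔ grFiltration W F n p ⊓ grFiltration W G n (n - p) := by
  have hle : grFiltration W F n p ≤ grFiltration W F n (p + 1) ⊔ grFiltration W G n (n - p) := by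
    have := h.le_sup n (p + 1)
    rw [show n - (p + 1) + 1 = n - p by ring] at this
    exact (grFiltration_le h.monotone n p).trans this
  refine le_of_eq ?_
  calc grFiltration W F n p
      = grFiltration W F n p ⊓ (grFiltration W G n (n - p) ⊔ grFiltration W F n (p + 1)) := by
        rw [sup_comm]; exact (inf_eq_left.2 hle).symm
    _ = grFiltration W F n (p + 1) ⊔ grFiltration W F n p ⊓ grFiltration W G n (n - p) := by
        rw [← inf_sup_assoc_of_le _ (grFiltration_antitone h.antitone_left n (by omega)), sup_comm]

theorem grFiltration_le_iSup (h : IsOpposed W F G) (n p : ℤ) :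
    grFiltration W F n p ≤
      (⨆ (r) (_ : p ≤ r), grFiltration W F n r ⊓ grFiltration W G n (n - r)) ⊔ W (n - 1) := by
  obtain ⟨b, hb⟩ := h.exists_left_eq_bot
  have hfin : ∀ p ≥ b, grFiltration W F n p ≤ W (n - 1) := fun p hp => by
    simp [grFiltration, hb p hp]
  induction p using Int.inductionOn' (b := b) with
  | zero => exact le_sup_of_le_right (hfin b le_rfl)
  | succ k hk _ => exact le_sup_of_le_right (hfin _ (by omega))
  | pred k _ ih =>
    refine (h.grFiltration_le_sup n (k - 1)).trans (sup_le ?_ ?_)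
    · rw [sub_add_cancel]
      exact ih.trans (sup_le_sup_right (biSup_mono fun r hr => by omega) _)
    · exact le_sup_of_le_left (le_iSup₂_of_le (k - 1) le_rfl le_rfl)

end IsOpposed

end Opposed

section Deligne

variable {R M : Type*} [Ring R] [AddCommGroup M] [Module R M] {W F G : ℤ → Submodule R M}

def deligneTail (W G : ℤ → Submodule R M) (p q : ℤ) : Submodule R M :=
  ⨆ j : ℕ, G (q - 1 - j) ⊓ W (p + q - 2 - j)

/-- Deligne's `I^{p,q} = F^p ∩ W_{p+q} ∩ (G^q ∩ W_{p+q} + ∑_{j ≥ 1} G^{q-j} ∩ W_{p+q-j-1})`. -/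
def deligneI (W F G : ℤ → Submodule R M) (i : ℤ × ℤ) : Submodule R M :=
  F i.1 ⊓ W (i.1 + i.2) ⊓ (G i.2 ⊓ W (i.1 + i.2) ⊔ deligneTail W G i.1 i.2)

theorem deligneI_le_left (i : ℤ × ℤ) : deligneI W F G i ≤ F i.1 ⊓ W (i.1 + i.2) :=
  inf_le_left

theorem deligneI_le_right (i : ℤ × ℤ) :
    deligneI W F G i ≤ G i.2 ⊓ W (i.1 + i.2) ⊔ deligneTail W G i.1 i.2 :=
  inf_le_right

theorem deligneTail_le (hW : Monotone W) (p q : ℤ) : deligneTail W G p q ≤ W (p + q - 2) :=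
  iSup_le fun _ => inf_le_right.trans (hW (by omega))

theorem deligneI_le_grFiltration (hW : Monotone W) (i : ℤ × ℤ) :
    deligneI W F G i ≤
      grFiltration W F (i.1 + i.2) i.1 ⊓ grFiltration W G (i.1 + i.2) i.2 :=
  le_inf ((deligneI_le_left i).trans le_sup_left) <| (deligneI_le_right i).trans <|
    sup_le_sup_left ((deligneTail_le hW _ _).trans (hW (by omega))) _

theorem le_sup_deligneTail (hW : Monotone W) (hG : Antitone G) {p q r s : ℤ} (hs : s ≤ p + q)
    (hrs : s - r < p) : G r ⊓ W s ≤ G q ⊓ W (p + q) ⊔ deligneTail W G p q := by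
  rcases le_or_gt q r with hqr | hrq
  · exact le_sup_of_le_left (inf_le_inf (hG hqr) (hW hs))
  · refine le_sup_of_le_right (le_iSup_of_le (q - r - 1).toNat ?_)
    rw [Int.toNat_of_nonneg (by omega), show q - 1 - (q - r - 1) = r by ring]
    exact inf_le_inf_left _ (hW (by omega))

theorem deligneI_le_sup_deligneTail (hW : Monotone W) (hG : Antitone G) {p q : ℤ} {i : ℤ × ℤ}
    (hi : i.1 < p) (hwt : i.1 + i.2 ≤ p + q) :
    deligneI W F G i ≤ G q ⊓ W (p + q) ⊔ deligneTail W G p q :=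
  (deligneI_le_right i).trans <| sup_le (le_sup_deligneTail hW hG hwt (by omega)) <|
    iSup_le fun _ => le_sup_deligneTail hW hG (by omega) (by omega)

theorem sup_deligneTail_le (hW : Monotone W) (hG : Antitone G) {p q r : ℤ} (hr : r ≤ q) :
    G q ⊓ W (p + q) ⊔ deligneTail W G p q ≤ G r ⊔ W (p + r - 2) := by
  refine sup_le (le_sup_of_le_left (inf_le_left.trans (hG hr))) (iSup_le fun j => ?_)
  by_cases hj : r ≤ q - 1 - j
  · exact le_sup_of_le_left (inf_le_left.trans (hG hj))
  · exact le_sup_of_le_right (inf_le_right.trans (hW (by omega)))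

theorem map_deligneI_le {R' N : Type*} [Ring R'] [AddCommGroup N] [Module R' N] {τ : R →+* R'}
    [RingHomSurjective τ] (g : M →ₛₗ[τ] N) {W' F' G' : ℤ → Submodule R' N}
    (hW : ∀ n, (W n).map g ≤ W' n) (hF : ∀ p, (F p).map g ≤ F' p)
    (hG : ∀ p, (G p).map g ≤ G' p) (i : ℤ × ℤ) :
    (deligneI W F G i).map g ≤ deligneI W' F' G' i := by
  have hGW (q n : ℤ) : (G q ⊓ W n).map g ≤ G' q ⊓ W' n :=
    (Submodule.map_inf_le g).trans (inf_le_inf (hG q) (hW n))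
  refine (Submodule.map_inf_le g).trans (inf_le_inf ((Submodule.map_inf_le g).trans
    (inf_le_inf (hF _) (hW _))) ?_)
  rw [Submodule.map_sup, deligneTail, Submodule.map_iSup]
  exact sup_le_sup (hGW _ _) (iSup_mono fun _ => hGW _ _)

namespace IsOpposed

/- `W_{p+q-1}` splits into a part `H` inside `F^p` and a part `L` inside the second factor `T` of
`I^{p,q} = X ⊓ T`; the modular law then peels both off. -/
theorem grFiltration_inf_le_deligneI_sup (h : IsOpposed W F G) {n p q : ℤ} (hpq : p + q = n)
    (hW : W (n - 1) ≤ ⨆ j ∈ {j : ℤ × ℤ | j.1 + j.2 ≤ n - 1}, deligneI W F G j) :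
    grFiltration W F n p ⊓ grFiltration W G n q ≤ deligneI W F G (p, q) ⊔ W (n - 1) := by
  subst hpq
  set X := F p ⊓ W (p + q)
  set T := G q ⊓ W (p + q) ⊔ deligneTail W G p q
  set H := F p ⊓ W (p + q - 1)
  set L := T ⊓ W (p + q - 1)
  have hH : H ≤ X := inf_le_inf_left _ (h.monotone (by omega))
  have hsplit : W (p + q - 1) ≤ H ⊔ L := by
    refine hW.trans (iSup₂_le fun j (hj : j.1 + j.2 ≤ p + q - 1) => ?_)
    have hjW : deligneI W F G j ≤ W (p + q - 1) :=
      (deligneI_le_left j).trans (inf_le_right.trans (h.monotone hj))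
    by_cases hj1 : p ≤ j.1
    · exact le_sup_of_le_left (le_inf ((deligneI_le_left j).trans inf_le_left |>.trans
        (h.antitone_left hj1)) hjW)
    · exact le_sup_of_le_right (le_inf (deligneI_le_sup_deligneTail h.monotone h.antitone_right
        (by omega) (by omega)) hjW)
  calc grFiltration W F (p + q) p ⊓ grFiltration W G (p + q) q
      ≤ (L ⊔ X) ⊓ (T ⊔ H) := by
        refine inf_le_inf (sup_le le_sup_right ?_) (sup_le (le_sup_of_le_left le_sup_left) ?_)
        · exact hsplit.trans (sup_le (le_sup_of_le_right hH) le_sup_left)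
        · exact hsplit.trans (sup_le le_sup_right (le_sup_of_le_left inf_le_left))
    _ = L ⊔ (X ⊓ T ⊔ H) := by
        rw [sup_inf_assoc_of_le _ (le_sup_of_le_left inf_le_left), inf_sup_assoc_of_le _ hH]
    _ ≤ deligneI W F G (p, q) ⊔ W (p + q - 1) :=
        sup_le (le_sup_of_le_right inf_le_right) (sup_le_sup le_rfl inf_le_right)

theorem grFiltration_le_iSup_deligneI (h : IsOpposed W F G) {n : ℤ}
    (hW : W (n - 1) ≤ ⨆ j ∈ {j : ℤ × ℤ | j.1 + j.2 ≤ n - 1}, deligneI W F G j) (p : ℤ) :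
    grFiltration W F n p ≤
      (⨆ j ∈ {j : ℤ × ℤ | p ≤ j.1 ∧ j.1 + j.2 = n}, deligneI W F G j) ⊔ W (n - 1) := by
  refine (h.grFiltration_le_iSup n p).trans (sup_le (iSup₂_le fun r hr => ?_) le_sup_right)
  have hn : r + (n - r) = n := by ring
  exact (h.grFiltration_inf_le_deligneI_sup hn hW).trans (sup_le_sup_right (le_biSup
    (deligneI W F G) (⟨hr, hn⟩ : (r, n - r) ∈ {j : ℤ × ℤ | p ≤ j.1 ∧ j.1 + j.2 = n})) _)

theorem iSup_deligneI_weight (h : IsOpposed W F G) (n : ℤ) :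
    ⨆ j ∈ {j : ℤ × ℤ | j.1 + j.2 ≤ n}, deligneI W F G j = W n := by
  refine le_antisymm (iSup₂_le fun j hj => (deligneI_le_left j).trans
    (inf_le_right.trans (h.monotone hj))) ?_
  obtain ⟨a, ha⟩ := h.exists_eq_bot
  obtain ⟨c, hc⟩ := h.exists_left_eq_top
  induction n using Int.inductionOn' (b := a) with
  | zero => simp [ha a le_rfl]
  | pred k hk _ => simp [ha (k - 1) (by omega)]
  | succ k _ ih =>
    have hW : W (k + 1) ≤ grFiltration W F (k + 1) c := by simp [grFiltration, hc c le_rfl]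
    rw [← add_sub_cancel_right k 1] at ih
    refine hW.trans ((h.grFiltration_le_iSup_deligneI ih c).trans (sup_le ?_ ?_))
    · exact biSup_mono fun j hj => hj.2.le
    · exact ih.trans (biSup_mono fun j (hj : j.1 + j.2 ≤ k + 1 - 1) =>
        show j.1 + j.2 ≤ k + 1 by omega)

theorem iSup_deligneI_eq_top (h : IsOpposed W F G) : ⨆ j, deligneI W F G j = ⊤ := by
  obtain ⟨b, hb⟩ := h.exists_eq_top
  rw [eq_top_iff, ← hb b le_rfl, ← h.iSup_deligneI_weight b]
  exact iSup₂_le fun j _ => le_iSup _ j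

theorem iSup_deligneI_hodge (h : IsOpposed W F G) (p : ℤ) :
    ⨆ j ∈ {j : ℤ × ℤ | p ≤ j.1}, deligneI W F G j = F p := by
  set S := ⨆ j ∈ {j : ℤ × ℤ | p ≤ j.1}, deligneI W F G j
  have hSF : S ≤ F p := iSup₂_le fun j hj =>
    (deligneI_le_left j).trans (inf_le_left.trans (h.antitone_left hj))
  refine le_antisymm hSF ?_
  have key : ∀ n, F p ⊓ W n ≤ S := by
    obtain ⟨a, ha⟩ := h.exists_eq_bot
    intro n
    induction n using Int.inductionOn' (b := a) with
    | zero => simp [ha a le_rfl]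
    | pred k hk _ => simp [ha (k - 1) (by omega)]
    | succ k _ ih =>
      have hk := h.grFiltration_le_iSup_deligneI
        ((add_sub_cancel_right k 1).symm ▸ (h.iSup_deligneI_weight k).ge) p
      rw [add_sub_cancel_right] at hk
      calc F p ⊓ W (k + 1) ≤ (S ⊔ W k) ⊓ F p :=
            le_inf ((le_sup_left.trans hk).trans (sup_le_sup_right
              (biSup_mono fun j hj => hj.1) _)) inf_le_left
        _ = S ⊔ W k ⊓ F p := sup_inf_assoc_of_le _ hSF
        _ ≤ S := sup_le le_rfl (inf_comm (W k) (F p) ▸ ih)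
  obtain ⟨b, hb⟩ := h.exists_eq_top
  simpa [hb b le_rfl] using key b

theorem deligneI_inf_eq_bot (h : IsOpposed W F G) (i : ℤ × ℤ) :
    deligneI W F G i ⊓ W (i.1 + i.2 - 1) = ⊥ := by
  have step : ∀ m ≤ i.1 + i.2 - 1, deligneI W F G i ⊓ W m ≤ W (m - 1) := by
    intro m hm
    refine (le_inf ?_ ?_).trans (h.inf_le_of_lt (p := i.1) (q := m + 1 - i.1) (by omega))
    · exact le_sup_of_le_left (inf_le_inf_right _ ((deligneI_le_left i).trans inf_le_left))
    · have hT := (deligneI_le_right (F := F) i).trans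
        (sup_deligneTail_le h.monotone h.antitone_right (p := i.1) (r := m + 1 - i.1) (by omega))
      rw [show i.1 + (m + 1 - i.1) - 2 = m - 1 by ring, sup_comm] at hT
      rw [grFiltration, sup_comm, ← sup_inf_assoc_of_le _ (h.monotone (by omega))]
      exact inf_le_inf_right _ hT
  have desc : ∀ m ≤ i.1 + i.2 - 1, deligneI W F G i ⊓ W (i.1 + i.2 - 1) ≤ W m := by
    intro m hm
    induction m, hm using Int.leInductionDown with
    | base => exact inf_le_right
    | pred m hm ih => exact (le_inf inf_le_left ih).trans (step m hm)
  obtain ⟨a, ha⟩ := h.exists_eq_bot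
  exact eq_bot_iff.2 <| (desc _ (min_le_right a _)).trans (ha _ (min_le_left _ _)).le

/- The summand with the largest first index lies in `F^{a.1}` and, modulo the others, in
`G^{a.2 + 1}`, so it lies in `W_{n-1}`. -/
theorem mem_of_sum_mem (h : IsOpposed W F G) {n : ℤ} {s : Finset (ℤ × ℤ)} {v : ℤ × ℤ → M}
    (hs : ∀ i ∈ s, i.1 + i.2 = n)
    (hv : ∀ i ∈ s, v i ∈ grFiltration W F n i.1 ⊓ grFiltration W G n i.2)
    (hsum : ∑ i ∈ s, v i ∈ W (n - 1)) : ∀ i ∈ s, v i ∈ W (n - 1) := by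
  induction s using Finset.induction_on_max_value (f := fun i : ℤ × ℤ => i.1) with
  | empty => simp
  | insert a s ha hmax ih =>
    have hna : a.1 + a.2 = n := hs a (by simp)
    have hgt : ∀ i ∈ s, a.2 + 1 ≤ i.2 := fun i hi => by
      have hni : i.1 + i.2 = n := hs i (by simp [hi])
      have hne : i.1 ≠ a.1 := fun h1 => ne_of_mem_of_not_mem hi ha (Prod.ext h1 (by omega))
      have hia : i.1 ≤ a.1 := hmax i hi
      omega
    have hrest : ∑ i ∈ s, v i ∈ grFiltration W G n (a.2 + 1) := Submodule.sum_mem _ fun i hi =>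
      grFiltration_antitone h.antitone_right n (hgt i hi) (hv i (by simp [hi])).2
    rw [Finset.sum_insert ha] at hsum
    have hva : v a ∈ W (n - 1) := by
      refine h.inf_le_of_lt (p := a.1) (q := a.2 + 1) (by omega) ⟨(hv a (by simp)).1, ?_⟩
      have hsum' : v a + ∑ i ∈ s, v i ∈ grFiltration W G n (a.2 + 1) :=
        Submodule.mem_sup_right hsum
      simpa using Submodule.sub_mem _ hsum' hrest
    have hs' := ih (fun i hi => hs i (by simp [hi])) (fun i hi => hv i (by simp [hi]))
      (by simpa using Submodule.sub_mem _ hsum hva)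
    intro i hi
    rcases Finset.mem_insert.1 hi with rfl | hi
    exacts [hva, hs' i hi]

/- In a vanishing sum, the summands of top weight `n` add up to an element of `W_{n-1}`, hence
each of them lies in `W_{n-1}` and vanishes by `deligneI_inf_eq_bot`. -/
theorem iSupIndep_deligneI (h : IsOpposed W F G) : iSupIndep (deligneI W F G) := by
  rw [iSupIndep_iff_finsetSum_eq_zero_imp_eq_zero]
  intro s v hv hsum
  induction s using Finset.induction_on_max_value (f := fun i : ℤ × ℤ => i.1 + i.2) with
  | empty => simp
  | insert a s ha hmax ih =>
    set n := a.1 + a.2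
    set T := (insert a s).filter (fun i => i.1 + i.2 = n)
    have hT : ∑ i ∈ T, v i ∈ W (n - 1) := by
      rw [← neg_neg (∑ i ∈ T, v i), neg_eq_of_add_eq_zero_right
        ((Finset.sum_filter_add_sum_filter_not _ _ _).trans hsum), neg_mem_iff]
      refine Submodule.sum_mem _ fun i hi => ?_
      obtain ⟨hi, hin⟩ := Finset.mem_filter.1 hi
      have hwt : i.1 + i.2 ≤ n := by
        rcases Finset.mem_insert.1 hi with rfl | hi
        exacts [le_rfl, hmax i hi]
      exact h.monotone (by omega) ((deligneI_le_left i).trans inf_le_right (hv i hi))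
    have hva : v a ∈ W (n - 1) := by
      refine h.mem_of_sum_mem (fun i hi => (Finset.mem_filter.1 hi).2) (fun i hi => ?_) hT a
        (Finset.mem_filter.2 ⟨Finset.mem_insert_self a s, rfl⟩)
      obtain ⟨hi, hin⟩ := Finset.mem_filter.1 hi
      exact hin ▸ deligneI_le_grFiltration h.monotone i (hv i hi)
    have ha0 : v a = 0 := by
      have := Submodule.mem_inf.2 ⟨hv a (by simp), hva⟩
      rwa [h.deligneI_inf_eq_bot a, Submodule.mem_bot] at this
    have hs0 := ih (fun i hi => hv i (by simp [hi]))
      (by simpa [Finset.sum_insert ha, ha0] using hsum)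
    intro i hi
    rcases Finset.mem_insert.1 hi with rfl | hi
    exacts [ha0, hs0 i hi]

end IsOpposed

end Deligne

section Splitting

variable {M N : Type*} [AddCommGroup M] [Module ℂ M] [AddCommGroup N] [Module ℂ N]
  {σ : M →ₛₗ[starRingEnd ℂ] M} {W F : ℤ → Submodule ℂ M} {J : ℤ × ℤ → Submodule ℂ M}

def conjFiltration (σ : M →ₛₗ[starRingEnd ℂ] M) (F : ℤ → Submodule ℂ M) (q : ℤ) :
    Submodule ℂ M :=
  (F q).map σ

structure IsDeligneSplitting (σ : M →ₛₗ[starRingEnd ℂ] M) (W F : ℤ → Submodule ℂ M)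
    (J : ℤ × ℤ → Submodule ℂ M) : Prop where
  iSupIndep : iSupIndep J
  iSup_weight : ∀ n, ⨆ i ∈ {i : ℤ × ℤ | i.1 + i.2 ≤ n}, J i = W n
  iSup_hodge : ∀ p, ⨆ i ∈ {i : ℤ × ℤ | p ≤ i.1}, J i = F p
  map_le : ∀ i, (J i).map σ ≤ J i.swap ⊔ W (i.1 + i.2 - 1)

theorem IsOpposed.isDeligneSplitting (h : IsOpposed W F (conjFiltration σ F))
    (hσ : Function.Involutive σ) (hWσ : ∀ n, (W n).map σ ≤ W n) :
    IsDeligneSplitting σ W F (deligneI W F (conjFiltration σ F)) where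
  iSupIndep := h.iSupIndep_deligneI
  iSup_weight := h.iSup_deligneI_weight
  iSup_hodge := h.iSup_deligneI_hodge
  map_le i := by
    have hconj : (deligneI W F (conjFiltration σ F) i).map σ ≤
        deligneI W (conjFiltration σ F) F i :=
      map_deligneI_le σ hWσ (fun _ => le_rfl)
        (fun p => (Submodule.map_map_of_involutive hσ (F p)).le) i
    refine hconj.trans ((deligneI_le_grFiltration h.monotone i).trans ?_)
    rw [inf_comm]
    exact h.grFiltration_inf_le_deligneI_sup (add_comm _ _) (h.iSup_deligneI_weight _).ge

namespace IsDeligneSplitting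

theorem monotone (hJ : IsDeligneSplitting σ W F J) : Monotone W := fun m n hmn => by
  rw [← hJ.iSup_weight m, ← hJ.iSup_weight n]
  exact biSup_mono fun i (hi : i.1 + i.2 ≤ m) => hi.trans hmn

theorem map_weight_le (hJ : IsDeligneSplitting σ W F J) (n : ℤ) : (W n).map σ ≤ W n := by
  conv_lhs => rw [← hJ.iSup_weight n]
  simp only [Submodule.map_iSup]
  refine iSup₂_le fun i (hi : i.1 + i.2 ≤ n) =>
    (hJ.map_le i).trans (sup_le ?_ (hJ.monotone (by omega)))
  rw [← hJ.iSup_weight n]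
  exact le_biSup J (show i.2 + i.1 ≤ n by omega)

theorem inf_eq_biSup (hJ : IsDeligneSplitting σ W F J) (q n : ℤ) :
    F q ⊓ W n = ⨆ i ∈ {i : ℤ × ℤ | q ≤ i.1} ∩ {i | i.1 + i.2 ≤ n}, J i := by
  rw [← hJ.iSup_hodge, ← hJ.iSup_weight, hJ.iSupIndep.biSup_inf_biSup]

theorem map_inf_sup_le (hJ : IsDeligneSplitting σ W F J) (q n : ℤ) :
    (F q ⊓ W n).map σ ⊔ W (n - 1) ≤
      ⨆ i ∈ {i : ℤ × ℤ | q ≤ i.2 ∧ i.1 + i.2 ≤ n ∨ i.1 + i.2 ≤ n - 1}, J i := by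
  have hW : W (n - 1) ≤ ⨆ i ∈ {i : ℤ × ℤ | q ≤ i.2 ∧ i.1 + i.2 ≤ n ∨ i.1 + i.2 ≤ n - 1}, J i := by
    rw [← hJ.iSup_weight]
    exact biSup_mono fun i hi => Or.inr hi
  rw [hJ.inf_eq_biSup]
  simp only [Submodule.map_iSup]
  refine sup_le (iSup₂_le fun i (hi : q ≤ i.1 ∧ i.1 + i.2 ≤ n) =>
    (hJ.map_le i).trans (sup_le ?_ ((hJ.monotone (by omega)).trans hW))) hW
  have hswap : i.swap ∈ {i : ℤ × ℤ | q ≤ i.2 ∧ i.1 + i.2 ≤ n ∨ i.1 + i.2 ≤ n - 1} :=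
    Or.inl ⟨hi.1, show i.2 + i.1 ≤ n by omega⟩
  exact le_biSup J hswap

theorem le_map_swap_sup (hJ : IsDeligneSplitting σ W F J) (hσ : Function.Involutive σ)
    (i : ℤ × ℤ) : J i ≤ (J i.swap).map σ ⊔ W (i.1 + i.2 - 1) :=
  calc J i = ((J i).map σ).map σ := (Submodule.map_map_of_involutive hσ _).symm
    _ ≤ (J i.swap ⊔ W (i.1 + i.2 - 1)).map σ := Submodule.map_mono (hJ.map_le i)
    _ ≤ (J i.swap).map σ ⊔ W (i.1 + i.2 - 1) := by
      rw [Submodule.map_sup]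
      exact sup_le_sup_left (hJ.map_weight_le _) _

theorem hodge_inf_eq (hJ : IsDeligneSplitting σ W F J) (n p : ℤ) :
    (F p ⊓ W n ⊔ W (n - 1)) ⊓ ((F (n - p + 1) ⊓ W n).map σ ⊔ W (n - 1)) = W (n - 1) := by
  refine le_antisymm ?_ (le_inf le_sup_right le_sup_right)
  have hF : F p ⊓ W n ⊔ W (n - 1) ≤
      ⨆ i ∈ {i : ℤ × ℤ | p ≤ i.1 ∧ i.1 + i.2 ≤ n ∨ i.1 + i.2 ≤ n - 1}, J i := by
    rw [hJ.inf_eq_biSup, ← hJ.iSup_weight]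
    exact sup_le (biSup_mono fun i hi => Or.inl hi) (biSup_mono fun i hi => Or.inr hi)
  refine (inf_le_inf hF (hJ.map_inf_sup_le _ n)).trans ?_
  rw [hJ.iSupIndep.biSup_inf_biSup, ← hJ.iSup_weight]
  refine biSup_mono fun i hi => ?_
  obtain ⟨h1 | h1, h2 | h2⟩ := hi <;> exact (show i.1 + i.2 ≤ n - 1 by omega)

theorem hodge_sup_eq (hJ : IsDeligneSplitting σ W F J) (hσ : Function.Involutive σ) (n p : ℤ) :
    F p ⊓ W n ⊔ (F (n - p + 1) ⊓ W n).map σ ⊔ W (n - 1) = W n := by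
  refine le_antisymm (sup_le (sup_le inf_le_right
    ((Submodule.map_mono inf_le_right).trans (hJ.map_weight_le n))) (hJ.monotone (by omega))) ?_
  conv_lhs => rw [← hJ.iSup_weight n]
  refine iSup₂_le fun i (hi : i.1 + i.2 ≤ n) => ?_
  by_cases hlow : i.1 + i.2 ≤ n - 1
  · exact le_sup_of_le_right (hJ.iSup_weight (n - 1) ▸ le_biSup J hlow)
  by_cases hp : p ≤ i.1
  · exact le_sup_of_le_left (le_sup_of_le_left (hJ.inf_eq_biSup p n ▸ le_biSup J ⟨hp, hi⟩))
  have hswap : i.swap ∈ {i : ℤ × ℤ | n - p + 1 ≤ i.1} ∩ {i | i.1 + i.2 ≤ n} :=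
    ⟨show n - p + 1 ≤ i.2 by omega, show i.2 + i.1 ≤ n by omega⟩
  refine (hJ.le_map_swap_sup hσ i).trans (sup_le_sup (le_sup_of_le_right (Submodule.map_mono ?_))
    (hJ.monotone (by omega)))
  exact hJ.inf_eq_biSup (n - p + 1) n ▸ le_biSup J hswap

theorem map {σ' : N →ₛₗ[starRingEnd ℂ] N} {K : ℤ × ℤ → Submodule ℂ M}
    (hJ : IsDeligneSplitting σ W F J) (g : M →ₗ[ℂ] N) (hg : ∀ x, g (σ x) = σ' (g x))
    (hKJ : K ≤ J) (hker : LinearMap.ker g = ⨆ i, K i) :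
    IsDeligneSplitting σ' (fun n => (W n).map g) (fun p => (F p).map g)
      (fun i => (J i).map g) where
  iSupIndep := hJ.iSupIndep.map_of_ker_eq_iSup hKJ g hker
  iSup_weight n := by simp only [← hJ.iSup_weight n, Submodule.map_iSup]
  iSup_hodge p := by simp only [← hJ.iSup_hodge p, Submodule.map_iSup]
  map_le i := by
    rw [← Submodule.map_map_comm g hg, ← Submodule.map_sup]
    exact Submodule.map_mono (hJ.map_le i)

end IsDeligneSplitting

end Splitting

section Complexification

variable {V V' : Type*} [AddCommGroup V] [Module ℝ V] [AddCommGroup V'] [Module ℝ V']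

theorem sigmaC_tmul (z : ℂ) (v : V) : sigmaC V (z ⊗ₜ[ℝ] v) = (starRingEnd ℂ) z ⊗ₜ[ℝ] v := rfl

theorem sigmaC_involutive : Function.Involutive (sigmaC V) := fun x => by
  induction x using TensorProduct.induction_on with
  | zero => simp
  | tmul z v => rw [sigmaC_tmul, sigmaC_tmul, Complex.conj_conj]
  | add a b ha hb => rw [map_add, map_add, ha, hb]

theorem baseChange_sigmaC (g : V →ₗ[ℝ] V') (x : ℂ ⊗[ℝ] V) :
    g.baseChange ℂ (sigmaC V x) = sigmaC V' (g.baseChange ℂ x) := by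
  induction x using TensorProduct.induction_on with
  | zero => simp
  | tmul z v => rfl
  | add a b ha hb => simp only [map_add, ha, hb]

theorem map_sigmaC_baseChange_le (p : Submodule ℝ V) :
    (p.baseChange ℂ).map (sigmaC V) ≤ p.baseChange ℂ := by
  rw [Submodule.baseChange_eq_span, Submodule.map_span_le]
  rintro _ ⟨v, hv, rfl⟩
  exact Submodule.subset_span ⟨v, hv, by simp [sigmaC_tmul]⟩

theorem IsMixedHodgeStructure.isOpposed {W : ℤ → Submodule ℝ V} {F : ℤ → Submodule ℂ (ℂ ⊗[ℝ] V)}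
    (h : IsMixedHodgeStructure V W F) :
    IsOpposed (fun n => (W n).baseChange ℂ) F (conjFiltration (sigmaC V) F) := by
  obtain ⟨hW, ⟨a, ha⟩, ⟨b, hb⟩, hF, hFtop, hFbot, hodge⟩ := h
  have hF' : Antitone F := antitone_int_of_succ_le hF
  have hconj (n q : ℤ) : (F q ⊓ (W n).baseChange ℂ).map (sigmaC V) =
      conjFiltration (sigmaC V) F q ⊓ (W n).baseChange ℂ := by
    rw [Submodule.map_inf _ sigmaC_involutive.injective,
      Submodule.map_eq_of_involutive sigmaC_involutive (map_sigmaC_baseChange_le _)]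
    rfl
  refine ⟨fun m n hmn => Submodule.baseChange_mono ℂ (hW hmn), hF',
    fun p q hpq => Submodule.map_mono (hF' hpq), ⟨a, fun n hn => by simp [ha n hn]⟩,
    ⟨b, fun n hn => by simp [hb n hn]⟩, hFtop, hFbot, fun n p => ?_, fun n p => ?_⟩
  · exact ((hconj n _).symm ▸ (hodge n p).1).le
  · have := (hodge n p).2
    rw [hconj] at this
    exact this.ge.trans (sup_le (sup_le (le_sup_of_le_left le_sup_left)
      (le_sup_of_le_right le_sup_left)) (le_sup_of_le_left le_sup_right))

theorem IsMixedHodgeStructure.map_of_isDeligneSplitting {W : ℤ → Submodule ℝ V}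
    {F : ℤ → Submodule ℂ (ℂ ⊗[ℝ] V)} (h : IsMixedHodgeStructure V W F) {π : V →ₗ[ℝ] V'}
    (hπ : Function.Surjective π) {J : ℤ × ℤ → Submodule ℂ (ℂ ⊗[ℝ] V')}
    (hJ : IsDeligneSplitting (sigmaC V') (fun n => ((W n).map π).baseChange ℂ)
      (fun p => (F p).map (π.baseChange ℂ)) J) :
    IsMixedHodgeStructure V' (fun n => (W n).map π) (fun p => (F p).map (π.baseChange ℂ)) := by
  obtain ⟨hW, ⟨a, ha⟩, ⟨b, hb⟩, hF, ⟨c, hc⟩, ⟨d, hd⟩, -⟩ := h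
  refine ⟨fun m n hmn => Submodule.map_mono (hW hmn), ⟨a, fun n hn => by simp [ha n hn]⟩,
    ⟨b, fun n hn => by simp [hb n hn, LinearMap.range_eq_top.2 hπ]⟩,
    fun p => Submodule.map_mono (hF p), ⟨c, fun p hp => ?_⟩, ⟨d, fun p hp => by simp [hd p hp]⟩,
    fun n p => ⟨hJ.hodge_inf_eq n p, hJ.hodge_sup_eq sigmaC_involutive n p⟩⟩
  simp only [hc p hp, Submodule.map_top, LinearMap.range_eq_top, LinearMap.baseChange_eq_ltensor]
  exact LinearMap.lTensor_surjective ℂ hπ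

theorem map_baseChange_deligneI_le {W : ℤ → Submodule ℝ V} {F : ℤ → Submodule ℂ (ℂ ⊗[ℝ] V)}
    {W' : ℤ → Submodule ℝ V'} {F' : ℤ → Submodule ℂ (ℂ ⊗[ℝ] V')} {f : V →ₗ[ℝ] V'}
    (hfW : ∀ n, (W n).map f ≤ W' n) (hfF : ∀ p, (F p).map (f.baseChange ℂ) ≤ F' p)
    (i : ℤ × ℤ) :
    (deligneI (fun n => (W n).baseChange ℂ) F (conjFiltration (sigmaC V) F) i).map
        (f.baseChange ℂ) ≤
      deligneI (fun n => (W' n).baseChange ℂ) F' (conjFiltration (sigmaC V') F') i :=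
  map_deligneI_le (f.baseChange ℂ)
    (fun n => Submodule.baseChange_map (A := ℂ) f (W n) ▸ Submodule.baseChange_mono ℂ (hfW n))
    hfF (fun p => (Submodule.map_map_comm _ (baseChange_sigmaC f) (F p)).le.trans
      (Submodule.map_mono (hfF p))) i

end Complexification

theorem mhs_cokernel_general (V V' : Type*)
    [AddCommGroup V] [Module ℝ V]
    [AddCommGroup V'] [Module ℝ V']
    (W : ℤ → Submodule ℝ V) (F : ℤ → Submodule ℂ (ℂ ⊗[ℝ] V))
    (W' : ℤ → Submodule ℝ V') (F' : ℤ → Submodule ℂ (ℂ ⊗[ℝ] V'))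
    (hWF : IsMixedHodgeStructure V W F) (hWF' : IsMixedHodgeStructure V' W' F')
    (f : V →ₗ[ℝ] V')
    (hfW : ∀ n : ℤ, (W n).map f ≤ W' n)
    (hfF : ∀ p : ℤ, (F p).map (f.baseChange ℂ) ≤ F' p) :
    IsMixedHodgeStructure (V' ⧸ LinearMap.range f)
      (fun n => (W' n).map (LinearMap.range f).mkQ)
      (fun p => (F' p).map ((LinearMap.range f).mkQ.baseChange ℂ)) := by
  set π := (LinearMap.range f).mkQ
  have hker : LinearMap.ker (π.baseChange ℂ) = ⨆ i, (deligneI (fun n => (W n).baseChange ℂ) F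
      (conjFiltration (sigmaC V) F) i).map (f.baseChange ℂ) := by
    rw [(LinearMap.exact_map_mkQ_range f).ker_baseChange (Submodule.mkQ_surjective _),
      LinearMap.range_eq_map, ← hWF.isOpposed.iSup_deligneI_eq_top, Submodule.map_iSup]
  have hsplit := (hWF'.isOpposed.isDeligneSplitting sigmaC_involutive
    fun n => map_sigmaC_baseChange_le (W' n)).map (π.baseChange ℂ) (baseChange_sigmaC π)
    (map_baseChange_deligneI_le hfW hfF) hker
  simp only [← Submodule.baseChange_map] at hsplit
  exact hWF'.map_of_isDeligneSplitting (Submodule.mkQ_surjective _) hsplit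

/-- cokernels. Let `f` be a morphism of mixed Hodge structures
`(V, W, F) → (V', W', F')`, let `Q := V' / f(V)` with quotient map `π`, and identify
`Q_ℂ` with `V'_ℂ / f_ℂ(V_ℂ)`, with quotient map `π_ℂ` the base change of `π`. Then the
induced filtrations `W^Q_n := π(W'_n)` and `F^p_Q := π_ℂ(F'^p)` define a mixed Hodge
structure on `Q`. -/
theorem mhs_cokernel (V V' : Type*)
    [AddCommGroup V] [Module ℝ V] [FiniteDimensional ℝ V]
    [AddCommGroup V'] [Module ℝ V'] [FiniteDimensional ℝ V']
    (W : ℤ → Submodule ℝ V) (F : ℤ → Submodule ℂ (ℂ ⊗[ℝ] V))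
    (W' : ℤ → Submodule ℝ V') (F' : ℤ → Submodule ℂ (ℂ ⊗[ℝ] V'))
    (hWF : IsMixedHodgeStructure V W F) (hWF' : IsMixedHodgeStructure V' W' F')
    (f : V →ₗ[ℝ] V')
    (hfW : ∀ n : ℤ, (W n).map f ≤ W' n)
    (hfF : ∀ p : ℤ, (F p).map (f.baseChange ℂ) ≤ F' p) :
    IsMixedHodgeStructure (V' ⧸ LinearMap.range f)
      (fun n => (W' n).map (LinearMap.range f).mkQ)
      (fun p => (F' p).map ((LinearMap.range f).mkQ.baseChange ℂ)) :=
  mhs_cokernel_general V V' W F W' F' hWF hWF' f hfW hfF
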